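/- arXiv:2604.10928 — 8 statements merged into one kernel-verified Lean document; each statement's English description precedes it below -/
import Mathlib

section
/- Let r ≥ 3 and r-2 ≥ t ≥ 1 be integers, and let H be a family of (t+1)-element subsets of {1,...,r} such that any two sets in H intersect in at least t elements. Then |H| ≤ max(r - t, t + 2). -/
theorem stmt_3 (r t : ℕ) (hr : 3 ≤ r) (ht : 1 ≤ t) (htr : t ≤ r - 2)
    (H : Finset (Finset (Fin r)))
    (huniform : ∀ A ∈ H, A.card = t + 1)
    (hint : ∀ A ∈ H, ∀ B ∈ H, t ≤ (A ∩ B).card) :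
    H.card ≤ max (r - t) (t + 2) := by
  by_cases hsmall : H.card ≤ 1
  · exact le_trans (le_trans hsmall (by omega)) (le_max_right _ _)
  -- obtain two distinct members
  obtain ⟨A, hA, B, hB, hAB⟩ := Finset.one_lt_card.1 (Nat.not_le.mp hsmall)
  have hAcard := huniform A hA
  have hBcard := huniform B hB
  -- |A ∩ B| = t
  have hTcard : (A ∩ B).card = t := by
    have h1 : t ≤ (A ∩ B).card := hint A hA B hB
    have h2 : (A ∩ B).card ≤ t + 1 := le_trans (Finset.card_le_card Finset.inter_subset_left) (le_of_eq hAcard)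
    rcases Nat.lt_or_ge (A ∩ B).card (t+1) with h | h
    · omega
    · exfalso
      have hA' : A ∩ B = A := Finset.eq_of_subset_of_card_le Finset.inter_subset_left (by omega)
      have hB' : A ∩ B = B := Finset.eq_of_subset_of_card_le Finset.inter_subset_right (by omega)
      exact hAB (hA' ▸ hB')
  set T := A ∩ B with hT
  -- key lemma: if C ∈ H, X ∈ H, z ∈ X, z ∉ C, then X \ {z} ⊆ C
  have key : ∀ C ∈ H, ∀ X ∈ H, ∀ z ∈ X, z ∉ C → X \ {z} ⊆ C := by
    intro C hC X hX z hzX hzC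
    have hsub : C ∩ X ⊆ X \ {z} := by
      intro x hx
      rw [Finset.mem_inter] at hx
      rw [Finset.mem_sdiff, Finset.mem_singleton]
      exact ⟨hx.2, fun h => hzC (h ▸ hx.1)⟩
    have hcard : (X \ {z}).card = t := by
      rw [Finset.card_sdiff_of_subset (Finset.singleton_subset_iff.2 hzX), Finset.card_singleton,
        huniform X hX]; omega
    have heq : C ∩ X = X \ {z} :=
      Finset.eq_of_subset_of_card_le hsub (by rw [hcard]; exact hint C hC X hX)
    rw [← heq]
    exact Finset.inter_subset_left
  have hUcard : (A ∪ B).card = t + 2 := by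
    have := Finset.card_union_add_card_inter A B
    rw [hAcard, hBcard, ← hT, hTcard] at this
    omega
  by_cases hstar : ∀ C ∈ H, T ⊆ C
  -- star case
  · have hle : H.card ≤ ((Finset.univ \ T).powersetCard 1).card := by
      apply Finset.card_le_card_of_injOn (fun C => C \ T)
      · intro C hC
        rw [Finset.mem_coe, Finset.mem_powersetCard]
        constructor
        · exact Finset.sdiff_subset_sdiff (Finset.subset_univ C) le_rfl
        · rw [Finset.card_sdiff_of_subset (hstar C hC), hTcard, huniform C hC]; omega
      · intro C hC D hD h
        dsimp only at h
        have h1 : C = T ∪ (C \ T) := (Finset.union_sdiff_of_subset (hstar C hC)).symm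
        have h2 : D = T ∪ (D \ T) := (Finset.union_sdiff_of_subset (hstar D hD)).symm
        rw [h1, h2, h]
    rw [Finset.card_powersetCard, Finset.card_sdiff_of_subset (Finset.subset_univ T),
      Finset.card_univ, Fintype.card_fin, hTcard, Nat.choose_one_right] at hle
    exact le_trans hle (le_max_left _ _)
  -- clique case
  · push_neg at hstar
    obtain ⟨C, hC, hTC⟩ := hstar
    obtain ⟨z, hzT, hzC⟩ := Finset.not_subset.1 hTC
    have hzA : z ∈ A := (Finset.mem_inter.1 hzT).1
    have hzB : z ∈ B := (Finset.mem_inter.1 hzT).2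
    -- C = (A ∪ B) \ {z}
    have hCsub : (A ∪ B) \ {z} ⊆ C := by
      intro x hx
      rw [Finset.mem_sdiff, Finset.mem_union, Finset.mem_singleton] at hx
      rcases hx.1 with h | h
      · exact key C hC A hA z hzA hzC (Finset.mem_sdiff.2 ⟨h, by simpa using hx.2⟩)
      · exact key C hC B hB z hzB hzC (Finset.mem_sdiff.2 ⟨h, by simpa using hx.2⟩)
    have hCeq : (A ∪ B) \ {z} = C := by
      apply Finset.eq_of_subset_of_card_le hCsub
      rw [huniform C hC, Finset.card_sdiff_of_subset (Finset.singleton_subset_iff.2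
        (Finset.mem_union_left _ hzA)), Finset.card_singleton, hUcard]; omega
    have hCAB : C ⊆ A ∪ B := hCeq ▸ Finset.sdiff_subset
    -- every D ∈ H is contained in A ∪ B
    have hall : ∀ D ∈ H, D ⊆ A ∪ B := by
      intro D hD
      by_contra hcon
      obtain ⟨w, hwD, hwAB⟩ := Finset.not_subset.1 hcon
      have hwA : w ∉ A := fun h => hwAB (Finset.mem_union_left _ h)
      have hwB : w ∉ B := fun h => hwAB (Finset.mem_union_right _ h)
      have h1 : D \ {w} ⊆ A := key A hA D hD w hwD hwA
      have h2 : D \ {w} ⊆ B := key B hB D hD w hwD hwB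
      have h3 : D \ {w} ⊆ T := fun x hx => Finset.mem_inter.2 ⟨h1 hx, h2 hx⟩
      have h4 : D \ {w} = T := by
        apply Finset.eq_of_subset_of_card_le h3
        rw [hTcard, Finset.card_sdiff_of_subset (Finset.singleton_subset_iff.2 hwD),
          Finset.card_singleton, huniform D hD]; omega
      -- D ∩ C ⊆ T \ {z}
      have h5 : D ∩ C ⊆ T \ {z} := by
        intro x hx
        rw [Finset.mem_inter] at hx
        have hxw : x ≠ w := fun h => hwAB (hCAB (h ▸ hx.2))
        rw [Finset.mem_sdiff, Finset.mem_singleton]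
        refine ⟨h4 ▸ Finset.mem_sdiff.2 ⟨hx.1, by simpa using hxw⟩,
          fun h => hzC (h ▸ hx.2)⟩
      have h6 : (T \ {z}).card = t - 1 := by
        rw [Finset.card_sdiff_of_subset (Finset.singleton_subset_iff.2 hzT),
          Finset.card_singleton, hTcard]
      have h7 := le_trans (hint D hD C hC) (Finset.card_le_card h5)
      omega
    have hle : H.card ≤ ((A ∪ B).powersetCard (t+1)).card := by
      apply Finset.card_le_card
      intro D hD
      rw [Finset.mem_powersetCard]
      exact ⟨hall D hD, huniform D hD⟩
    rw [Finset.card_powersetCard, hUcard] at hle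
    have : (t+2).choose (t+1) = t + 2 := Nat.choose_succ_self_right (t+1)
    rw [this] at hle
    exact le_trans hle (le_max_right _ _)
end

section
/- Let r ≥ 3 and r-2 ≥ t ≥ 1 be integers, and let H be a t-intersecting family of (t+1)-element subsets of {1,...,r} with |H| = max(r-t, t+2). Then either H is a star of the form {T ∪ {i} : i ∉ T} for some fixed t-set T (when |H| = r-t), or H consists of all (t+1)-subsets of some fixed (t+2)-set (when |H| = t+2). -/
theorem stmt_4 (r t : ℕ) (hr : 3 ≤ r) (ht : 1 ≤ t) (htr : t ≤ r - 2)
    (H : Finset (Finset (Fin r)))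
    (huniform : ∀ A ∈ H, A.card = t + 1)
    (hint : ∀ A ∈ H, ∀ B ∈ H, t ≤ (A ∩ B).card)
    (hcard : H.card = max (r - t) (t + 2)) :
    (H.card = r - t ∧ ∃ T : Finset (Fin r), T.card = t ∧
      H = (Finset.univ.filter (fun i => i ∉ T)).image (fun i => insert i T)) ∨
    (H.card = t + 2 ∧ ∃ S : Finset (Fin r), S.card = t + 2 ∧
      H = S.powersetCard (t + 1)) := by
  have hH2 : 1 < H.card := by
    have : t + 2 ≤ H.card := hcard ▸ le_max_right _ _
    omega
  obtain ⟨A, hA, B, hB, hAB⟩ := Finset.one_lt_card.mp hH2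
  set T := A ∩ B with hTdef
  have hTA : T ⊆ A := Finset.inter_subset_left
  have hTcard : T.card = t := by
    have h1 : t ≤ T.card := hint A hA B hB
    have h2 : T.card ≤ t + 1 := by
      have := Finset.card_le_card hTA
      rw [huniform A hA] at this; exact this
    rcases eq_or_lt_of_le h1 with h | h
    · omega
    · exfalso
      have hTA' : T = A := Finset.eq_of_subset_of_card_le hTA (by rw [huniform A hA]; omega)
      have : A ⊆ B := by rw [← hTA']; exact Finset.inter_subset_right
      exact hAB (Finset.eq_of_subset_of_card_le this
        (by rw [huniform A hA, huniform B hB]))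
  have hABcard : (A ∪ B).card = t + 2 := by
    have := Finset.card_union_add_card_inter A B
    rw [huniform A hA, huniform B hB, ← hTdef, hTcard] at this
    omega
  -- key: if C ∈ H doesn't contain T then C ⊆ A ∪ B
  have hsub : ∀ C ∈ H, ¬ T ⊆ C → C ⊆ A ∪ B := by
    intro C hC hTC
    obtain ⟨x, hxT, hxC⟩ := Finset.not_subset.mp hTC
    have hxA : x ∈ A := hTA hxT
    have hxB : x ∈ B := Finset.inter_subset_right hxT
    have hCA : A.erase x ⊆ C := by
      have h1 : C ∩ A ⊆ A.erase x := by
        intro y hy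
        rw [Finset.mem_inter] at hy
        exact Finset.mem_erase.mpr ⟨fun h => hxC (h ▸ hy.1), hy.2⟩
      have h2 : (A.erase x).card = t := by rw [Finset.card_erase_of_mem hxA, huniform A hA]; omega
      have : C ∩ A = A.erase x := Finset.eq_of_subset_of_card_le h1
        (by rw [h2]; exact hint C hC A hA)
      rw [← this]; exact Finset.inter_subset_left
    have hCB : B.erase x ⊆ C := by
      have h1 : C ∩ B ⊆ B.erase x := by
        intro y hy
        rw [Finset.mem_inter] at hy
        exact Finset.mem_erase.mpr ⟨fun h => hxC (h ▸ hy.1), hy.2⟩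
      have h2 : (B.erase x).card = t := by rw [Finset.card_erase_of_mem hxB, huniform B hB]; omega
      have : C ∩ B = B.erase x := Finset.eq_of_subset_of_card_le h1
        (by rw [h2]; exact hint C hC B hB)
      rw [← this]; exact Finset.inter_subset_left
    have hsub2 : (A ∪ B).erase x ⊆ C := by
      intro y hy
      rw [Finset.mem_erase, Finset.mem_union] at hy
      rcases hy.2 with h | h
      · exact hCA (Finset.mem_erase.mpr ⟨hy.1, h⟩)
      · exact hCB (Finset.mem_erase.mpr ⟨hy.1, h⟩)
    have hcc : C = (A ∪ B).erase x := by
      refine (Finset.eq_of_subset_of_card_le hsub2 ?_).symm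
      rw [huniform C hC, Finset.card_erase_of_mem (Finset.mem_union_left _ hxA), hABcard]; omega
    rw [hcc]; exact Finset.erase_subset _ _
  by_cases hstar : ∀ C ∈ H, T ⊆ C
  · -- star case
    left
    have hHsub : H ⊆ (Finset.univ.filter (fun i => i ∉ T)).image (fun i => insert i T) := by
      intro C hC
      have hTC := hstar C hC
      have hd : (C \ T).card = 1 := by
        rw [Finset.card_sdiff_of_subset hTC, huniform C hC, hTcard]; omega
      obtain ⟨c, hc⟩ := Finset.card_eq_one.mp hd
      have hcC : c ∈ C ∧ c ∉ T := by
        have : c ∈ C \ T := hc ▸ Finset.mem_singleton_self c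
        exact ⟨(Finset.mem_sdiff.mp this).1, (Finset.mem_sdiff.mp this).2⟩
      refine Finset.mem_image.mpr ⟨c, Finset.mem_filter.mpr ⟨Finset.mem_univ _, hcC.2⟩, ?_⟩
      refine Finset.eq_of_subset_of_card_le ?_ ?_
      · exact Finset.insert_subset hcC.1 hTC
      · rw [huniform C hC, Finset.card_insert_of_notMem hcC.2, hTcard]
    have himcard : ((Finset.univ.filter (fun i => i ∉ T)).image (fun i => insert i T)).card
        = r - t := by
      rw [Finset.card_image_of_injOn]
      · have : Finset.univ.filter (fun i => i ∉ T) = Tᶜ := by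
          ext y; simp [Finset.mem_compl]
        rw [this, Finset.card_compl, hTcard, Fintype.card_fin]
      · intro i hi j hj hij
        simp only [Finset.mem_coe, Finset.mem_filter] at hi hj
        have hij' : insert i T = insert j T := hij
        have : i ∈ insert j T := hij' ▸ Finset.mem_insert_self i T
        rcases Finset.mem_insert.mp this with h | h
        · exact h
        · exact absurd h hi.2
    have hle : H.card ≤ r - t := himcard ▸ Finset.card_le_card hHsub
    have hge : r - t ≤ H.card := hcard ▸ le_max_left _ _
    have hcardrt : H.card = r - t := le_antisymm hle hge
    exact ⟨hcardrt, T, hTcard,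
      Finset.eq_of_subset_of_card_le hHsub (by rw [himcard, hcardrt])⟩
  · -- clique case
    right
    push_neg at hstar
    obtain ⟨C₀, hC₀, hTC₀⟩ := hstar
    obtain ⟨x, hxT, hxC₀⟩ := Finset.not_subset.mp hTC₀
    have hC₀S : C₀ ⊆ A ∪ B := hsub C₀ hC₀ hTC₀
    have hHS : ∀ D ∈ H, D ⊆ A ∪ B := by
      intro D hD
      by_cases hTD : T ⊆ D
      · have hd : (D \ T).card = 1 := by
          rw [Finset.card_sdiff_of_subset hTD, huniform D hD, hTcard]; omega
        obtain ⟨d, hdc⟩ := Finset.card_eq_one.mp hd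
        have hdD : d ∈ D ∧ d ∉ T := by
          have : d ∈ D \ T := hdc ▸ Finset.mem_singleton_self d
          exact ⟨(Finset.mem_sdiff.mp this).1, (Finset.mem_sdiff.mp this).2⟩
        have hDeq : D = insert d T := by
          refine Finset.eq_of_subset_of_card_le ?_ ?_ |>.symm
          · exact Finset.insert_subset hdD.1 hTD
          · rw [huniform D hD, Finset.card_insert_of_notMem hdD.2, hTcard]
        have hdC₀ : d ∈ C₀ := by
          by_contra hdC
          have hsub3 : D ∩ C₀ ⊆ T.erase x := by
            intro y hy
            rw [Finset.mem_inter] at hy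
            have hyT : y ∈ T := by
              have := hDeq ▸ hy.1
              rcases Finset.mem_insert.mp this with h | h
              · exact absurd (h ▸ hy.2) hdC
              · exact h
            exact Finset.mem_erase.mpr ⟨fun h => hxC₀ (h ▸ hy.2), hyT⟩
          have h1 : (T.erase x).card = t - 1 := by rw [Finset.card_erase_of_mem hxT, hTcard]
          have h2 := Finset.card_le_card hsub3
          have h3 := hint D hD C₀ hC₀
          omega
        rw [hDeq]
        exact Finset.insert_subset (hC₀S hdC₀)
          (hTA.trans Finset.subset_union_left)
      · exact hsub D hD hTD
    have hHsub : H ⊆ (A ∪ B).powersetCard (t + 1) := by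
      intro D hD
      exact Finset.mem_powersetCard.mpr ⟨hHS D hD, huniform D hD⟩
    have hpcard : ((A ∪ B).powersetCard (t + 1)).card = t + 2 := by
      rw [Finset.card_powersetCard, hABcard]
      exact Nat.choose_succ_self_right (t + 1)
    have hle : H.card ≤ t + 2 := hpcard ▸ Finset.card_le_card hHsub
    have hge : t + 2 ≤ H.card := hcard ▸ le_max_right _ _
    have hcardt2 : H.card = t + 2 := le_antisymm hle hge
    exact ⟨hcardt2, A ∪ B, hABcard,
      Finset.eq_of_subset_of_card_le hHsub (by rw [hpcard, hcardt2])⟩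
end

section
/- Let n_1 ≥ n_2 ≥ n_3 ≥ 2 be integers and let F ⊆ [n_1] × [n_2] × [n_3] be a family of triples such that any two triples agree in at least one coordinate, and there is no coordinate ℓ in which all triples of F have the same value. Then |F| ≤ n_1 + n_2 + n_3 - 2. -/
open Finset

section helpers

variable {α β γ : Type*} [DecidableEq α] [DecidableEq β] [DecidableEq γ]
  [Fintype α] [Fintype β] [Fintype γ]

lemma helper2 (F : Finset (α × β × γ))
    (hint : ∀ A ∈ F, ∀ B ∈ F, A.1 = B.1 ∨ A.2.1 = B.2.1 ∨ A.2.2 = B.2.2)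
    (A B C : α × β × γ) (hA : A ∈ F) (hB : B ∈ F) (hC : C ∈ F)
    (hAB1 : A.1 = B.1) (h2 : A.2.1 ≠ B.2.1) (h3 : A.2.2 ≠ B.2.2)
    (hC1 : C.1 ≠ A.1) (hC2 : C.2.1 = A.2.1) (hC3 : C.2.2 = B.2.2) :
    F.card ≤ Fintype.card α + Fintype.card β + Fintype.card γ - 2 := by
  obtain ⟨x, a₂, a₃⟩ := A
  obtain ⟨x', b₂, b₃⟩ := B
  obtain ⟨c, c₂, c₃⟩ := C
  have e1 : x = x' := hAB1
  have e2 : c₂ = a₂ := hC2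
  have e3 : c₃ = b₃ := hC3
  subst x'
  subst c₂
  subst c₃
  replace h2 : a₂ ≠ b₂ := h2
  replace h3 : a₃ ≠ b₃ := h3
  replace hC1 : c ≠ x := hC1
  have cardα : 2 ≤ Fintype.card α := Fintype.one_lt_card_iff.2 ⟨c, x, hC1⟩
  have cardβ : 2 ≤ Fintype.card β := Fintype.one_lt_card_iff.2 ⟨a₂, b₂, h2⟩
  have cardγ : 2 ≤ Fintype.card γ := Fintype.one_lt_card_iff.2 ⟨a₃, b₃, h3⟩
  have star : ∀ E ∈ F, E.1 ≠ x → (E.2.1 = a₂ ∧ E.2.2 = b₃) ∨ (E.2.1 = b₂ ∧ E.2.2 = a₃) := by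
    rintro ⟨e₁, e₂, e₃⟩ hE hne
    rcases hint _ hE _ hA with h | h | h
    · exact absurd h hne
    · rcases hint _ hE _ hB with h' | h' | h'
      · exact absurd h' hne
      · exact absurd (h.symm.trans h') h2
      · exact Or.inl ⟨h, h'⟩
    · rcases hint _ hE _ hB with h' | h' | h'
      · exact absurd h' hne
      · exact Or.inr ⟨h', h⟩
      · exact absurd (h.symm.trans h') h3
  by_cases hD : ∃ D ∈ F, D.1 ≠ x ∧ D.2.1 = b₂ ∧ D.2.2 = a₃
  · obtain ⟨⟨d, d₂, d₃⟩, hD, hd1, hd2, hd3⟩ := hD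
    have e4 : d₂ = b₂ := hd2
    have e5 : d₃ = a₃ := hd3
    subst d₂
    subst d₃
    replace hd1 : d ≠ x := hd1
    have hcd : c = d := by
      rcases hint _ hC _ hD with h | h | h
      · exact h
      · exact absurd h h2
      · exact absurd h.symm h3
    subst d
    have hsub : F ⊆ {(x, a₂, a₃), (x, b₂, b₃), (c, a₂, b₃), (c, b₂, a₃)} := by
      rintro ⟨e₁, e₂, e₃⟩ hE
      by_cases he : e₁ = x
      · subst e₁
        have m1 : e₂ = a₂ ∨ e₃ = b₃ := by
          rcases hint _ hE _ hC with h | h | h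
          · exact absurd h.symm hC1
          · exact Or.inl h
          · exact Or.inr h
        have m2 : e₂ = b₂ ∨ e₃ = a₃ := by
          rcases hint _ hE _ hD with h | h | h
          · exact absurd h.symm hC1
          · exact Or.inl h
          · exact Or.inr h
        rcases m1 with h | h <;> rcases m2 with h' | h'
        · exact absurd (h.symm.trans h') h2
        · subst h; subst h'; simp
        · subst h; subst h'; simp
        · exact absurd (h'.symm.trans h) h3
      · rcases star _ hE he with ⟨h1', h2'⟩ | ⟨h1', h2'⟩
        · have he1 : e₁ = c := by
            rcases hint _ hE _ hD with h | h | h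
            · exact h
            · exact absurd (h1'.symm.trans h) h2
            · exact absurd (h.symm.trans h2') h3
          subst he1; subst h1'; subst h2'; simp
        · have he1 : e₁ = c := by
            rcases hint _ hE _ hC with h | h | h
            · exact h
            · exact absurd (h.symm.trans h1') h2
            · exact absurd (h2'.symm.trans h) h3
          subst he1; subst h1'; subst h2'; simp
    have h4 := Finset.card_le_card hsub
    have i1 := Finset.card_insert_le (x, a₂, a₃)
      ({(x, b₂, b₃), (c, a₂, b₃), (c, b₂, a₃)} : Finset (α × β × γ))
    have i2 := Finset.card_insert_le (x, b₂, b₃)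
      ({(c, a₂, b₃), (c, b₂, a₃)} : Finset (α × β × γ))
    have i3 := Finset.card_insert_le (c, a₂, b₃) ({(c, b₂, a₃)} : Finset (α × β × γ))
    have i4 : ({(c, b₂, a₃)} : Finset (α × β × γ)).card = 1 := Finset.card_singleton _
    omega
  · push_neg at hD
    have star' : ∀ E ∈ F, E.1 ≠ x → E.2.1 = a₂ ∧ E.2.2 = b₃ := by
      intro E hE h
      rcases star E hE h with h' | ⟨h1', h2'⟩
      · exact h'
      · exact absurd h2' (hD E hE h h1')
    have hsub : F ⊆ (univ : Finset α).image (fun t => (t, a₂, b₃))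
        ∪ ((univ : Finset β).erase a₂).image (fun s => (x, s, b₃))
        ∪ ((univ : Finset γ).erase b₃).image (fun u => (x, a₂, u)) := by
      rintro ⟨e₁, e₂, e₃⟩ hE
      by_cases he : e₁ = x
      · subst e₁
        have m1 : e₂ = a₂ ∨ e₃ = b₃ := by
          rcases hint _ hE _ hC with h | h | h
          · exact absurd h.symm hC1
          · exact Or.inl h
          · exact Or.inr h
        rcases m1 with h | h
        · subst h
          by_cases h3' : e₃ = b₃
          · subst h3'
            exact mem_union_left _ (mem_union_left _ (mem_image.2 ⟨x, mem_univ _, rfl⟩))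
          · exact mem_union_right _ (mem_image.2 ⟨e₃, mem_erase.2 ⟨h3', mem_univ _⟩, rfl⟩)
        · subst h
          by_cases h2' : e₂ = a₂
          · subst h2'
            exact mem_union_left _ (mem_union_left _ (mem_image.2 ⟨x, mem_univ _, rfl⟩))
          · exact mem_union_left _
              (mem_union_right _ (mem_image.2 ⟨e₂, mem_erase.2 ⟨h2', mem_univ _⟩, rfl⟩))
      · obtain ⟨h1', h2'⟩ := star' _ hE he
        have h1'' : e₂ = a₂ := h1'
        have h2'' : e₃ = b₃ := h2'
        subst h1''; subst h2''
        exact mem_union_left _ (mem_union_left _ (mem_image.2 ⟨e₁, mem_univ _, rfl⟩))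
    have h4 := Finset.card_le_card hsub
    have u1 := Finset.card_union_le
      ((univ : Finset α).image (fun t => (t, a₂, b₃))
        ∪ ((univ : Finset β).erase a₂).image (fun s => (x, s, b₃)))
      (((univ : Finset γ).erase b₃).image (fun u => (x, a₂, u)))
    have u2 := Finset.card_union_le
      ((univ : Finset α).image (fun t => (t, a₂, b₃)))
      (((univ : Finset β).erase a₂).image (fun s => (x, s, b₃)))
    have c1 : ((univ : Finset α).image (fun t => (t, a₂, b₃))).card ≤ Fintype.card α :=
      le_trans Finset.card_image_le (by simp)
    have c2 : (((univ : Finset β).erase a₂).image (fun s => (x, s, b₃))).card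
        ≤ Fintype.card β - 1 :=
      le_trans Finset.card_image_le (by simp [Finset.card_erase_of_mem])
    have c3 : (((univ : Finset γ).erase b₃).image (fun u => (x, a₂, u))).card
        ≤ Fintype.card γ - 1 :=
      le_trans Finset.card_image_le (by simp [Finset.card_erase_of_mem])
    omega

lemma helper (F : Finset (α × β × γ))
    (hint : ∀ A ∈ F, ∀ B ∈ F, A.1 = B.1 ∨ A.2.1 = B.2.1 ∨ A.2.2 = B.2.2)
    (A B : α × β × γ) (hA : A ∈ F) (hB : B ∈ F)
    (hAB1 : A.1 = B.1) (h2 : A.2.1 ≠ B.2.1) (h3 : A.2.2 ≠ B.2.2)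
    (hnt1 : ¬ ∃ c, ∀ X ∈ F, X.1 = c) :
    F.card ≤ Fintype.card α + Fintype.card β + Fintype.card γ - 2 := by
  push_neg at hnt1
  obtain ⟨C, hC, hCne⟩ := hnt1 A.1
  have m1 : C.2.1 = A.2.1 ∨ C.2.2 = A.2.2 := by
    rcases hint _ hC _ hA with h | h | h
    · exact absurd h hCne
    · exact Or.inl h
    · exact Or.inr h
  have m2 : C.2.1 = B.2.1 ∨ C.2.2 = B.2.2 := by
    rcases hint _ hC _ hB with h | h | h
    · exact absurd (h.trans hAB1.symm) hCne
    · exact Or.inl h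
    · exact Or.inr h
  rcases m1 with h | h <;> rcases m2 with h' | h'
  · exact absurd (h.symm.trans h') h2
  · exact helper2 F hint A B C hA hB hC hAB1 h2 h3 hCne h h'
  · exact helper2 F hint B A C hB hA hC hAB1.symm (Ne.symm h2) (Ne.symm h3)
      (fun hh => hCne (hh.trans hAB1.symm)) h' h
  · exact absurd (h.symm.trans h') h3

lemma helperB {n₁ n₂ n₃ : ℕ} (F : Finset (Fin n₁ × Fin n₂ × Fin n₃))
    (hint : ∀ A ∈ F, ∀ B ∈ F, A.1 = B.1 ∨ A.2.1 = B.2.1 ∨ A.2.2 = B.2.2)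
    (hnt2 : ¬ ∃ c, ∀ A ∈ F, A.2.1 = c)
    (X Y : Fin n₁ × Fin n₂ × Fin n₃) (hX : X ∈ F) (hY : Y ∈ F)
    (h1 : X.1 ≠ Y.1) (h2 : X.2.1 = Y.2.1) (h3 : X.2.2 ≠ Y.2.2) :
    F.card ≤ n₁ + n₂ + n₃ - 2 := by
  let e : (Fin n₁ × Fin n₂ × Fin n₃) ≃ (Fin n₂ × Fin n₁ × Fin n₃) :=
    ⟨fun p => (p.2.1, p.1, p.2.2), fun p => (p.2.1, p.1, p.2.2),
      fun p => rfl, fun p => rfl⟩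
  have hcard : (F.image e).card = F.card := Finset.card_image_of_injective F e.injective
  have hint' : ∀ A ∈ F.image e, ∀ B ∈ F.image e,
      A.1 = B.1 ∨ A.2.1 = B.2.1 ∨ A.2.2 = B.2.2 := by
    intro A' hA' B' hB'
    obtain ⟨A, hA, rfl⟩ := Finset.mem_image.1 hA'
    obtain ⟨B, hB, rfl⟩ := Finset.mem_image.1 hB'
    show A.2.1 = B.2.1 ∨ A.1 = B.1 ∨ A.2.2 = B.2.2
    have := hint A hA B hB
    tauto
  have hnt' : ¬ ∃ c, ∀ Z ∈ F.image e, Z.1 = c := by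
    rintro ⟨c, hc⟩
    exact hnt2 ⟨c, fun Z hZ => hc (e Z) (Finset.mem_image_of_mem _ hZ)⟩
  have key := helper (F.image e) hint' (e X) (e Y)
    (Finset.mem_image_of_mem _ hX) (Finset.mem_image_of_mem _ hY) h2 h1 h3 hnt'
  simp only [Fintype.card_fin] at key
  omega

lemma helperC {n₁ n₂ n₃ : ℕ} (F : Finset (Fin n₁ × Fin n₂ × Fin n₃))
    (hint : ∀ A ∈ F, ∀ B ∈ F, A.1 = B.1 ∨ A.2.1 = B.2.1 ∨ A.2.2 = B.2.2)
    (hnt3 : ¬ ∃ c, ∀ A ∈ F, A.2.2 = c)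
    (X Y : Fin n₁ × Fin n₂ × Fin n₃) (hX : X ∈ F) (hY : Y ∈ F)
    (h1 : X.1 ≠ Y.1) (h2 : X.2.1 ≠ Y.2.1) (h3 : X.2.2 = Y.2.2) :
    F.card ≤ n₁ + n₂ + n₃ - 2 := by
  let e : (Fin n₁ × Fin n₂ × Fin n₃) ≃ (Fin n₃ × Fin n₁ × Fin n₂) :=
    ⟨fun p => (p.2.2, p.1, p.2.1), fun q => (q.2.1, q.2.2, q.1),
      fun p => rfl, fun q => rfl⟩
  have hcard : (F.image e).card = F.card := Finset.card_image_of_injective F e.injective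
  have hint' : ∀ A ∈ F.image e, ∀ B ∈ F.image e,
      A.1 = B.1 ∨ A.2.1 = B.2.1 ∨ A.2.2 = B.2.2 := by
    intro A' hA' B' hB'
    obtain ⟨A, hA, rfl⟩ := Finset.mem_image.1 hA'
    obtain ⟨B, hB, rfl⟩ := Finset.mem_image.1 hB'
    show A.2.2 = B.2.2 ∨ A.1 = B.1 ∨ A.2.1 = B.2.1
    have := hint A hA B hB
    tauto
  have hnt' : ¬ ∃ c, ∀ Z ∈ F.image e, Z.1 = c := by
    rintro ⟨c, hc⟩
    exact hnt3 ⟨c, fun Z hZ => hc (e Z) (Finset.mem_image_of_mem _ hZ)⟩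
  have key := helper (F.image e) hint' (e X) (e Y)
    (Finset.mem_image_of_mem _ hX) (Finset.mem_image_of_mem _ hY) h3 h1 h2 hnt'
  simp only [Fintype.card_fin] at key
  omega

end helpers

theorem stmt_6 (n₁ n₂ n₃ : ℕ) (h12 : n₂ ≤ n₁) (h23 : n₃ ≤ n₂) (h3 : 2 ≤ n₃)
    (F : Finset (Fin n₁ × Fin n₂ × Fin n₃))
    (hint : ∀ A ∈ F, ∀ B ∈ F, A.1 = B.1 ∨ A.2.1 = B.2.1 ∨ A.2.2 = B.2.2)
    (hnt1 : ¬ ∃ c, ∀ A ∈ F, A.1 = c)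
    (hnt2 : ¬ ∃ c, ∀ A ∈ F, A.2.1 = c)
    (hnt3 : ¬ ∃ c, ∀ A ∈ F, A.2.2 = c) :
    F.card ≤ n₁ + n₂ + n₃ - 2 := by
  have hnt1' := hnt1
  push_neg at hnt1'
  obtain ⟨A, hA, -⟩ := hnt1' (⟨0, by omega⟩ : Fin n₁)
  obtain ⟨B, hB, hBne⟩ := hnt1' A.1
  have hAB : A.1 ≠ B.1 := hBne.symm
  by_cases h2 : A.2.1 = B.2.1
  · by_cases h3' : A.2.2 = B.2.2
    · have hnt2' := hnt2
      push_neg at hnt2'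
      obtain ⟨C, hC, hCne⟩ := hnt2' A.2.1
      by_cases hc1 : C.1 = A.1
      · have hCB1 : C.1 ≠ B.1 := fun hh => hAB (hc1.symm.trans hh)
        have hCB2 : C.2.1 ≠ B.2.1 := fun hh => hCne (hh.trans h2.symm)
        have hCB3 : C.2.2 = B.2.2 := by
          rcases hint C hC B hB with h | h | h
          · exact absurd h hCB1
          · exact absurd h hCB2
          · exact h
        exact helperC F hint hnt3 C B hC hB hCB1 hCB2 hCB3
      · have hCA3 : C.2.2 = A.2.2 := by
          rcases hint C hC A hA with h | h | h
          · exact absurd h hc1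
          · exact absurd h hCne
          · exact h
        exact helperC F hint hnt3 C A hC hA hc1 hCne hCA3
    · exact helperB F hint hnt2 A B hA hB hAB h2 h3'
  · by_cases h3' : A.2.2 = B.2.2
    · exact helperC F hint hnt3 A B hA hB hAB h2 h3'
    · rcases hint A hA B hB with h | h | h
      · exact absurd h hAB
      · exact absurd h h2
      · exact absurd h h3'
end

section
/- Let r ≥ 3 and n_1 ≥ ⋯ ≥ n_r ≥ 2 be integers, and let F ⊆ [n_1] × ⋯ × [n_r] be such that any two vectors in F agree in at least r-2 coordinates and fewer than r-2 coordinates are constant across all of F. Then |F| ≤ n_1 + ⋯ + n_r - r + 1. -/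
open Finset

variable {r : ℕ} {n : Fin r → ℕ}

/-- The set of coordinates where two vectors differ. -/
def Df (X Y : ∀ ℓ : Fin r, Fin (n ℓ)) : Finset (Fin r) :=
  Finset.univ.filter (fun ℓ => X ℓ ≠ Y ℓ)

lemma mem_Df {X Y : ∀ ℓ : Fin r, Fin (n ℓ)} {ℓ : Fin r} : ℓ ∈ Df X Y ↔ X ℓ ≠ Y ℓ := by
  simp [Df]

lemma no3 {X Y : ∀ ℓ : Fin r, Fin (n ℓ)} (h : (Df X Y).card ≤ 2)
    {i j k : Fin r} (hij : i ≠ j) (hik : i ≠ k) (hjk : j ≠ k)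
    (hi : X i ≠ Y i) (hj : X j ≠ Y j) (hk : X k ≠ Y k) : False := by
  have hsub : ({i, j, k} : Finset (Fin r)) ⊆ Df X Y := by
    intro ℓ hℓ
    simp only [mem_insert, mem_singleton] at hℓ
    rcases hℓ with rfl | rfl | rfl <;> simpa [mem_Df]
  have hc := Finset.card_le_card hsub
  rw [card_insert_of_notMem (by simp [hij, hik]), card_insert_of_notMem (by simp [hjk]),
    card_singleton] at hc
  omega

lemma ball (hn : ∀ i, 2 ≤ n i) (F : Finset (∀ ℓ : Fin r, Fin (n ℓ)))
    (v : ∀ ℓ : Fin r, Fin (n ℓ))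
    (h : ∀ X ∈ F, (Df X v).card ≤ 1) : F.card ≤ (∑ ℓ, n ℓ) - r + 1 := by
  classical
  have hsub : F ⊆ insert v (Finset.univ.biUnion fun ℓ : Fin r =>
      ((Finset.univ.erase (v ℓ)).image fun a => Function.update v ℓ a)) := by
    intro X hX
    have hc := h X hX
    interval_cases hcard : (Df X v).card
    · have : X = v := by
        funext ℓ
        by_contra hne
        have : ℓ ∈ Df X v := mem_Df.2 hne
        simp [Finset.card_eq_zero.1 hcard] at this
      simp [this]
    · obtain ⟨ℓ, hℓ⟩ := Finset.card_eq_one.1 hcard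
      have hXv : X = Function.update v ℓ (X ℓ) := by
        funext m
        rcases eq_or_ne m ℓ with rfl | hm
        · simp
        · have : m ∉ Df X v := by rw [hℓ]; simpa using hm
          rw [mem_Df] at this
          push_neg at this
          rw [this, Function.update_of_ne hm]
      have hne : X ℓ ≠ v ℓ := by
        have : ℓ ∈ Df X v := by simp [hℓ]
        exact mem_Df.1 this
      refine mem_insert_of_mem (Finset.mem_biUnion.2 ⟨ℓ, mem_univ _, ?_⟩)
      exact Finset.mem_image.2 ⟨X ℓ, by simp [hne], hXv.symm⟩
  have h1 : F.card ≤ 1 + ∑ ℓ : Fin r, (n ℓ - 1) := by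
    calc F.card ≤ _ := Finset.card_le_card hsub
    _ ≤ _ + 1 := Finset.card_insert_le _ _
    _ ≤ (∑ ℓ : Fin r, ((Finset.univ.erase (v ℓ)).image fun a => Function.update v ℓ a).card) + 1 := by
        gcongr
        exact Finset.card_biUnion_le
    _ ≤ 1 + ∑ ℓ : Fin r, (n ℓ - 1) := by
        rw [Nat.add_comm]
        gcongr with ℓ
        calc ((Finset.univ.erase (v ℓ)).image fun a => Function.update v ℓ a).card
            ≤ (Finset.univ.erase (v ℓ)).card := Finset.card_image_le
          _ = n ℓ - 1 := by rw [Finset.card_erase_of_mem (mem_univ _)]; simp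
  have h2 : ∑ ℓ : Fin r, (n ℓ - 1) + r = ∑ ℓ, n ℓ := by
    have : ∀ ℓ : Fin r, n ℓ - 1 + 1 = n ℓ := fun ℓ => by have := hn ℓ; omega
    calc ∑ ℓ : Fin r, (n ℓ - 1) + r = ∑ ℓ : Fin r, (n ℓ - 1) + ∑ _ℓ : Fin r, 1 := by simp
      _ = ∑ ℓ : Fin r, (n ℓ - 1 + 1) := by rw [← Finset.sum_add_distrib]
      _ = ∑ ℓ : Fin r, n ℓ := Finset.sum_congr rfl fun ℓ _ => this ℓ
  omega

lemma key (F : Finset (∀ ℓ : Fin r, Fin (n ℓ)))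
    (h2 : ∀ A ∈ F, ∀ B ∈ F, (Df A B).card ≤ 2)
    {A B C : ∀ ℓ : Fin r, Fin (n ℓ)} (hA : A ∈ F) (hB : B ∈ F) (hC : C ∈ F)
    {i j k : Fin r} (hij : i ≠ j) (hik : i ≠ k) (hjk : j ≠ k)
    (hBi : B i ≠ A i) (hBj : B j ≠ A j) (hBo : ∀ ℓ, ℓ ≠ i → ℓ ≠ j → B ℓ = A ℓ)
    (hCj : C j ≠ A j) (hCk : C k ≠ A k) (hCo : ∀ ℓ, ℓ ≠ j → ℓ ≠ k → C ℓ = A ℓ) :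
    (∃ v, ∀ X ∈ F, (Df X v).card ≤ 1) ∨ F.card ≤ 4 := by
  classical
  have hBk : B k = A k := hBo k (Ne.symm hik) (Ne.symm hjk)
  have hCi : C i = A i := hCo i hij hik
  have hCBj : C j = B j := by
    by_contra h
    exact no3 (h2 B hB C hC) hij hik hjk
      (by rw [hCi]; exact hBi) (fun e => h e.symm) (by rw [hBk]; exact fun e => hCk e.symm)
  by_cases hX0 : ∃ X₀ ∈ F, X₀ i ≠ A i ∧ X₀ j = A j ∧ X₀ k ≠ A k
  · -- Case (b): triangle configuration, F ⊆ {A, B, C, X₀}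
    obtain ⟨X₀, hX₀F, hX₀i, hX₀j, hX₀k⟩ := hX0
    right
    have hX₀o : ∀ ℓ, ℓ ≠ i → ℓ ≠ k → X₀ ℓ = A ℓ := by
      intro ℓ hℓi hℓk
      rcases eq_or_ne ℓ j with rfl | hℓj
      · exact hX₀j
      by_contra h
      exact no3 (h2 X₀ hX₀F A hA) hik (Ne.symm hℓi) (Ne.symm hℓk) hX₀i hX₀k h
    have hX₀Bi : X₀ i = B i := by
      by_contra h
      exact no3 (h2 X₀ hX₀F B hB) hij hik hjk h
        (by rw [hX₀j]; exact Ne.symm hBj) (by rw [hBk]; exact hX₀k)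
    have hX₀Ck : X₀ k = C k := by
      by_contra h
      exact no3 (h2 X₀ hX₀F C hC) hij hik hjk
        (by rw [hCi]; exact hX₀i) (by rw [hX₀j]; exact Ne.symm hCj) h
    have hsub : F ⊆ {A, B, C, X₀} := by
      intro X hX
      have hXo : ∀ m, m ≠ i → m ≠ j → m ≠ k → X m = A m := by
        intro m hmi hmj hmk
        by_contra hm
        by_cases hXi : X i = A i <;> by_cases hXj : X j = A j
        · exact no3 (h2 X hX B hB) hij (Ne.symm hmi) (Ne.symm hmj)
            (by rw [hXi]; exact Ne.symm hBi) (by rw [hXj]; exact Ne.symm hBj)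
            (by rw [hBo m hmi hmj]; exact hm)
        · by_cases hXk : X k = A k
          · exact no3 (h2 X hX X₀ hX₀F) hik (Ne.symm hmi) (Ne.symm hmk)
              (by rw [hXi]; exact Ne.symm hX₀i) (by rw [hXk]; exact Ne.symm hX₀k)
              (by rw [hX₀o m hmi hmk]; exact hm)
          · exact no3 (h2 X hX A hA) hjk (Ne.symm hmj) (Ne.symm hmk) hXj hXk hm
        · by_cases hXk : X k = A k
          · exact no3 (h2 X hX C hC) hjk (Ne.symm hmj) (Ne.symm hmk)
              (by rw [hXj]; exact Ne.symm hCj) (by rw [hXk]; exact Ne.symm hCk)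
              (by rw [hCo m hmj hmk]; exact hm)
          · exact no3 (h2 X hX A hA) hik (Ne.symm hmi) (Ne.symm hmk) hXi hXk hm
        · exact no3 (h2 X hX A hA) hij (Ne.symm hmi) (Ne.symm hmj) hXi hXj hm
      simp only [mem_insert, mem_singleton]
      by_cases hXi : X i = A i <;> by_cases hXj : X j = A j <;> by_cases hXk : X k = A k
      · -- X = A
        left
        funext ℓ
        rcases eq_or_ne ℓ i with rfl | hℓi; · exact hXi
        rcases eq_or_ne ℓ j with rfl | hℓj; · exact hXj
        rcases eq_or_ne ℓ k with rfl | hℓk; · exact hXk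
        exact hXo ℓ hℓi hℓj hℓk
      · -- pattern {k}: contradiction via B
        exact absurd (no3 (h2 X hX B hB) hij hik hjk
          (by rw [hXi]; exact Ne.symm hBi) (by rw [hXj]; exact Ne.symm hBj)
          (by rw [hBk]; exact hXk)) not_false
      · -- pattern {j}: contradiction via X₀
        exact absurd (no3 (h2 X hX X₀ hX₀F) hij hik hjk
          (by rw [hXi]; exact Ne.symm hX₀i) (by rw [hX₀j]; exact hXj)
          (by rw [hXk]; exact Ne.symm hX₀k)) not_false
      · -- X = C
        have hXCj : X j = C j := by
          by_contra h
          exact no3 (h2 X hX B hB) hij hik hjk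
            (by rw [hXi]; exact Ne.symm hBi) (by rw [← hCBj]; exact h)
            (by rw [hBk]; exact hXk)
        have hXCk : X k = C k := by
          by_contra h
          exact no3 (h2 X hX X₀ hX₀F) hij hik hjk
            (by rw [hXi]; exact Ne.symm hX₀i) (by rw [hX₀j]; exact hXj)
            (by rw [hX₀Ck]; exact h)
        right; right; left
        funext ℓ
        rcases eq_or_ne ℓ i with rfl | hℓi; · rw [hXi, hCi]
        rcases eq_or_ne ℓ j with rfl | hℓj; · exact hXCj
        rcases eq_or_ne ℓ k with rfl | hℓk; · exact hXCk
        rw [hXo ℓ hℓi hℓj hℓk, hCo ℓ hℓj hℓk]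
      · -- pattern {i}: contradiction via C
        exact absurd (no3 (h2 X hX C hC) hij hik hjk
          (by rw [hCi]; exact hXi) (by rw [hXj]; exact Ne.symm hCj)
          (by rw [hXk]; exact Ne.symm hCk)) not_false
      · -- X = X₀
        have hXBi : X i = X₀ i := by
          by_contra h
          exact no3 (h2 X hX B hB) hij hik hjk
            (by rw [← hX₀Bi]; exact h) (by rw [hXj]; exact Ne.symm hBj)
            (by rw [hBk]; exact hXk)
        have hXX₀k : X k = X₀ k := by
          by_contra h
          exact no3 (h2 X hX C hC) hij hik hjk
            (by rw [hCi]; exact hXi) (by rw [hXj]; exact Ne.symm hCj)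
            (by rw [← hX₀Ck]; exact h)
        right; right; right
        funext ℓ
        rcases eq_or_ne ℓ i with rfl | hℓi; · exact hXBi
        rcases eq_or_ne ℓ j with rfl | hℓj; · rw [hXj, hX₀j]
        rcases eq_or_ne ℓ k with rfl | hℓk; · exact hXX₀k
        rw [hXo ℓ hℓi hℓj hℓk, hX₀o ℓ hℓi hℓk]
      · -- X = B
        have hXBj : X j = B j := by
          by_contra h
          exact no3 (h2 X hX C hC) hij hik hjk
            (by rw [hCi]; exact hXi) (by rw [hCBj]; exact h)
            (by rw [hXk]; exact Ne.symm hCk)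
        have hXBi : X i = B i := by
          by_contra h
          exact no3 (h2 X hX X₀ hX₀F) hij hik hjk
            (by rw [hX₀Bi]; exact h) (by rw [hX₀j]; exact hXj)
            (by rw [hXk]; exact Ne.symm hX₀k)
        right; left
        funext ℓ
        rcases eq_or_ne ℓ i with rfl | hℓi; · exact hXBi
        rcases eq_or_ne ℓ j with rfl | hℓj; · exact hXBj
        rcases eq_or_ne ℓ k with rfl | hℓk; · rw [hXk, hBk]
        rw [hXo ℓ hℓi hℓj hℓk, hBo ℓ hℓi hℓj]
      · -- contradiction via A
        exact absurd (no3 (h2 X hX A hA) hij hik hjk hXi hXj hXk) not_false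
    have a1 := card_insert_le A ({B, C, X₀} : Finset _)
    have a2 := card_insert_le B ({C, X₀} : Finset _)
    have a3 := card_insert_le C ({X₀} : Finset _)
    have a4 : ({X₀} : Finset (∀ ℓ : Fin r, Fin (n ℓ))).card = 1 := card_singleton _
    have := Finset.card_le_card hsub
    omega
  · -- Case (a): F is contained in a ball around update A j (B j)
    left
    refine ⟨Function.update A j (B j), ?_⟩
    intro X hX
    rw [Finset.card_le_one]
    intro m₁ hm₁ m₂ hm₂
    by_contra hne
    rw [mem_Df] at hm₁ hm₂
    have hvj : Function.update A j (B j) j = B j := Function.update_self _ _ _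
    have hvo : ∀ ℓ, ℓ ≠ j → Function.update A j (B j) ℓ = A ℓ :=
      fun ℓ h => Function.update_of_ne h _ _
    have L1 : ∀ m, m ≠ j → X m ≠ A m → X j ≠ B j → False := by
      intro m hmj hXm hXj'
      by_cases hXj : X j = A j
      · by_cases hmi : m = i
        · subst hmi
          by_cases hXk : X k = A k
          · exact no3 (h2 X hX C hC) hij hik hjk
              (by rw [hCi]; exact hXm) (by rw [hXj]; exact Ne.symm hCj)
              (by rw [hXk]; exact Ne.symm hCk)
          · exact hX0 ⟨X, hX, hXm, hXj, hXk⟩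
        · by_cases hmk : m = k
          · subst hmk
            by_cases hXi : X i = A i
            · exact no3 (h2 X hX B hB) hij hik hjk
                (by rw [hXi]; exact Ne.symm hBi) (by rw [hXj]; exact Ne.symm hBj)
                (by rw [hBk]; exact hXm)
            · exact hX0 ⟨X, hX, hXi, hXj, hXm⟩
          · by_cases hXi : X i = A i
            · exact no3 (h2 X hX B hB) hij (Ne.symm hmi) (Ne.symm hmj)
                (by rw [hXi]; exact Ne.symm hBi) (by rw [hXj]; exact Ne.symm hBj)
                (by rw [hBo m hmi hmj]; exact hXm)
            · by_cases hXk : X k = A k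
              · exact no3 (h2 X hX C hC) hik (Ne.symm hmi) (Ne.symm hmk)
                  (by rw [hCi]; exact hXi) (by rw [hXk]; exact Ne.symm hCk)
                  (by rw [hCo m hmj hmk]; exact hXm)
              · exact no3 (h2 X hX A hA) hik (Ne.symm hmi) (Ne.symm hmk) hXi hXk hXm
      · by_cases hmi : m = i
        · subst hmi
          have hXk : X k = A k := by
            by_contra h
            exact no3 (h2 X hX A hA) hij hik hjk hXm hXj h
          exact no3 (h2 X hX C hC) hij hik hjk
            (by rw [hCi]; exact hXm) (by rw [hCBj]; exact hXj')
            (by rw [hXk]; exact Ne.symm hCk)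
        · by_cases hmk : m = k
          · subst hmk
            have hXi : X i = A i := by
              by_contra h
              exact no3 (h2 X hX A hA) hij hik hjk h hXj hXm
            exact no3 (h2 X hX B hB) hij hik hjk
              (by rw [hXi]; exact Ne.symm hBi) hXj' (by rw [hBk]; exact hXm)
          · have hXi : X i = A i := by
              by_contra h
              exact no3 (h2 X hX A hA) hij (Ne.symm hmi) (Ne.symm hmj) h hXj hXm
            exact no3 (h2 X hX B hB) hij (Ne.symm hmi) (Ne.symm hmj)
              (by rw [hXi]; exact Ne.symm hBi) hXj' (by rw [hBo m hmi hmj]; exact hXm)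
    have L2 : ∀ a b, a ≠ b → a ≠ j → b ≠ j → X a ≠ A a → X b ≠ A b → False := by
      intro a b hab haj hbj hXa hXb
      have hXj : X j = A j := by
        by_contra h
        exact no3 (h2 X hX A hA) hab haj hbj hXa hXb h
      by_cases hXi : X i = A i <;> by_cases hXk : X k = A k
      · have hai : a ≠ i := by rintro rfl; exact hXa hXi
        exact no3 (h2 X hX B hB) hij (Ne.symm hai) (Ne.symm haj)
          (by rw [hXi]; exact Ne.symm hBi) (by rw [hXj]; exact Ne.symm hBj)
          (by rw [hBo a hai haj]; exact hXa)
      · exact no3 (h2 X hX B hB) hij hik hjk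
          (by rw [hXi]; exact Ne.symm hBi) (by rw [hXj]; exact Ne.symm hBj)
          (by rw [hBk]; exact hXk)
      · exact no3 (h2 X hX C hC) hij hik hjk
          (by rw [hCi]; exact hXi) (by rw [hXj]; exact Ne.symm hCj)
          (by rw [hXk]; exact Ne.symm hCk)
      · exact hX0 ⟨X, hX, hXi, hXj, hXk⟩
    by_cases h1j : m₁ = j
    · subst h1j
      rw [hvj] at hm₁
      rw [hvo m₂ (Ne.symm hne)] at hm₂
      exact L1 m₂ (Ne.symm hne) hm₂ hm₁
    · by_cases h2j : m₂ = j
      · subst h2j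
        rw [hvj] at hm₂
        rw [hvo m₁ h1j] at hm₁
        exact L1 m₁ h1j hm₁ hm₂
      · rw [hvo m₁ h1j] at hm₁
        rw [hvo m₂ h2j] at hm₂
        exact L2 m₁ m₂ hne h1j h2j hm₁ hm₂

open Finset in
theorem stmt_8_main (r : ℕ) (hr : 3 ≤ r) (n : Fin r → ℕ)
    (hn : ∀ i, 2 ≤ n i)
    (F : Finset (∀ ℓ : Fin r, Fin (n ℓ)))
    (hint : ∀ A ∈ F, ∀ B ∈ F,
      r - 2 ≤ (Finset.univ.filter (fun ℓ => A ℓ = B ℓ)).card)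
    (hnt : (Finset.univ.filter (fun ℓ : Fin r => ∀ A ∈ F, ∀ B ∈ F, A ℓ = B ℓ)).card < r - 2) :
    F.card ≤ (∑ ℓ, n ℓ) - r + 1 := by
  obtain ⟨S, hS3, hSnc⟩ : ∃ S : Finset (Fin r), 3 ≤ S.card ∧
      ∀ ℓ ∈ S, ¬ ∀ A ∈ F, ∀ B ∈ F, A ℓ = B ℓ := by
    refine ⟨Finset.univ.filter (fun ℓ : Fin r => ¬ ∀ A ∈ F, ∀ B ∈ F, A ℓ = B ℓ), ?_,
      fun ℓ hℓ => (Finset.mem_filter.1 hℓ).2⟩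
    have e : (Finset.univ.filter (fun ℓ : Fin r => ¬ ∀ A ∈ F, ∀ B ∈ F, A ℓ = B ℓ))
        = Finset.univ \ (Finset.univ.filter (fun ℓ : Fin r => ∀ A ∈ F, ∀ B ∈ F, A ℓ = B ℓ)) :=
      Finset.filter_not _ _
    rw [e, Finset.card_sdiff_of_subset (Finset.filter_subset _ _), Finset.card_univ, Fintype.card_fin]
    generalize (Finset.univ.filter
      (fun ℓ : Fin r => ∀ A ∈ F, ∀ B ∈ F, A ℓ = B ℓ)).card = c at hnt ⊢
    omega
  clear hnt
  classical
  have h2 : ∀ X ∈ F, ∀ Y ∈ F, (Df X Y).card ≤ 2 := by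
    intro X hX Y hY
    have h := hint X hX Y hY
    have hdf : Df X Y = univ \ univ.filter (fun ℓ => X ℓ = Y ℓ) := by
      simp [Df, Finset.filter_not]
    have hcard : (Df X Y).card = r - (univ.filter (fun ℓ => X ℓ = Y ℓ)).card := by
      rw [hdf, Finset.card_sdiff_of_subset (Finset.filter_subset _ _)]
      simp
    have hle : (univ.filter (fun ℓ => X ℓ = Y ℓ)).card ≤ r := by
      have := Finset.card_le_card (Finset.filter_subset
        (fun ℓ => X ℓ = Y ℓ) (univ : Finset (Fin r)))
      simpa using this
    omega
  -- arithmetic helpers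
  have hsum2 : 2 * r ≤ ∑ ℓ, n ℓ := by
    calc 2 * r = ∑ _ℓ : Fin r, 2 := by simp [mul_comm]
      _ ≤ _ := Finset.sum_le_sum fun ℓ _ => hn ℓ
  have h4done : F.card ≤ 4 → F.card ≤ (∑ ℓ, n ℓ) - r + 1 := by intro h; omega
  -- F is nonempty
  rcases F.eq_empty_or_nonempty with rfl | ⟨A, hA⟩
  · obtain ⟨ℓ0, hℓ0⟩ := Finset.card_pos.1 (by omega : 0 < S.card)
    exact (hSnc ℓ0 hℓ0 (fun A hA => absurd hA (Finset.notMem_empty A))).elim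
  by_cases hball : ∀ X ∈ F, (Df X A).card ≤ 1
  · exact ball hn F A hball
  push_neg at hball
  obtain ⟨B, hB, hBc⟩ := hball
  have hBc2 : (Df B A).card = 2 := le_antisymm (h2 B hB A hA) hBc
  obtain ⟨i, j, hij, hDf⟩ := Finset.card_eq_two.1 hBc2
  have hBi : B i ≠ A i := mem_Df.1 (by rw [hDf]; simp)
  have hBj : B j ≠ A j := mem_Df.1 (by rw [hDf]; simp)
  have hBo : ∀ ℓ, ℓ ≠ i → ℓ ≠ j → B ℓ = A ℓ := by
    intro ℓ h1 h2'
    by_contra h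
    have : ℓ ∈ Df B A := mem_Df.2 h
    rw [hDf] at this
    simp [h1, h2'] at this
  -- find a nonconstant coordinate outside {i, j}
  have hk : ∃ k ∈ S, k ≠ i ∧ k ≠ j := by
    by_contra h
    have hsub : S ⊆ {i, j} := by
      intro x hx
      simp only [Finset.mem_insert, Finset.mem_singleton]
      by_contra hc
      push_neg at hc
      exact h ⟨x, hx, hc⟩
    have hle := Finset.card_le_card hsub
    have hle2 : ({i, j} : Finset (Fin r)).card ≤ 2 :=
      (Finset.card_insert_le _ _).trans (by simp)
    omega
  obtain ⟨k, hkmem, hki, hkj⟩ := hk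
  have hknc := hSnc k hkmem
  push_neg at hknc
  obtain ⟨X, hX, Y, hY, hXY⟩ := hknc
  have hCex : ∃ C ∈ F, C k ≠ A k := by
    rcases eq_or_ne (X k) (A k) with h | h
    · exact ⟨Y, hY, fun e => hXY (h.trans e.symm)⟩
    · exact ⟨X, hX, h⟩
  obtain ⟨C, hC, hCk⟩ := hCex
  have hCij : C i ≠ A i ∨ C j ≠ A j := by
    by_contra h
    push_neg at h
    obtain ⟨h1, h2'⟩ := h
    exact no3 (h2 B hB C hC) hij (Ne.symm hki) (Ne.symm hkj)
      (by rw [h1]; exact hBi) (by rw [h2']; exact hBj)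
      (by rw [hBo k hki hkj]; exact fun e => hCk e.symm)
  rcases hCij with hCi' | hCj'
  · -- C differs from A exactly at {i, k}; apply key with roles of i and j swapped
    have hCo' : ∀ ℓ, ℓ ≠ i → ℓ ≠ k → C ℓ = A ℓ := by
      intro ℓ h1 hk2
      by_contra h
      exact no3 (h2 C hC A hA) (Ne.symm hki) (Ne.symm h1) (Ne.symm hk2) hCi' hCk h
    rcases key F h2 hA hB hC hij.symm (Ne.symm hkj) (Ne.symm hki)
      hBj hBi (fun ℓ ha hb => hBo ℓ hb ha) hCi' hCk hCo' with ⟨v, hv⟩ | h4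
    · exact ball hn F v hv
    · exact h4done h4
  · -- C differs from A exactly at {j, k}
    have hCo' : ∀ ℓ, ℓ ≠ j → ℓ ≠ k → C ℓ = A ℓ := by
      intro ℓ h1 hk2
      by_contra h
      exact no3 (h2 C hC A hA) (Ne.symm hkj) (Ne.symm h1) (Ne.symm hk2) hCj' hCk h
    rcases key F h2 hA hB hC hij (Ne.symm hki) (Ne.symm hkj)
      hBi hBj hBo hCj' hCk hCo' with ⟨v, hv⟩ | h4
    · exact ball hn F v hv
    · exact h4done h4

theorem stmt_8 (r : ℕ) (hr : 3 ≤ r) (n : Fin r → ℕ)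
    (hmono : ∀ i j : Fin r, i ≤ j → n j ≤ n i) (hn : ∀ i, 2 ≤ n i)
    (F : Finset (∀ ℓ : Fin r, Fin (n ℓ)))
    (hint : ∀ A ∈ F, ∀ B ∈ F,
      r - 2 ≤ (Finset.univ.filter (fun ℓ => A ℓ = B ℓ)).card)
    (hnt : (Finset.univ.filter (fun ℓ : Fin r => ∀ A ∈ F, ∀ B ∈ F, A ℓ = B ℓ)).card < r - 2) :
    F.card ≤ (∑ ℓ, n ℓ) - r + 1 := by
  exact stmt_8_main r hr n hn F hint hnt
end

section
/- Let r ≥ 2 and n ≥ 2, and let G ⊆ 2^{[r]} be a family of subsets of [r] with ρ_i sets of size i. Suppose ρ_0 = ρ_1 = 0, ρ_i + ρ_{r-i} ≤ C(r,i) for all i, and ρ_i ≤ C(r-1, i-1) for all 2 ≤ i ≤ r/2. Then ∑_{i=0}^{r} ρ_i (n-1)^{r-i} ≤ n^{r-1} - (n-1)^{r-1} + n - 1. -/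
theorem stmt_10 (r n : ℕ) (hr : 2 ≤ r) (hn : 2 ≤ n) (ρ : ℕ → ℕ)
    (h0 : ρ 0 = 0) (h1 : ρ 1 = 0)
    (hpair : ∀ i ≤ r, ρ i + ρ (r - i) ≤ r.choose i)
    (hEKR : ∀ i, 2 ≤ i → 2 * i ≤ r → ρ i ≤ (r - 1).choose (i - 1)) :
    (∑ i ∈ Finset.range (r + 1), (ρ i : ℤ) * ((n : ℤ) - 1) ^ (r - i)) ≤
      (n : ℤ) ^ (r - 1) - ((n : ℤ) - 1) ^ (r - 1) + n - 1 := by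
  set x : ℤ := (n : ℤ) - 1 with hxdef
  have hnz : (2 : ℤ) ≤ (n : ℤ) := by exact_mod_cast hn
  have hx : 1 ≤ x := by omega
  have hx0 : 0 ≤ x := by omega
  have hnx : (n : ℤ) = x + 1 := by omega
  set τ : ℕ → ℕ := fun i => if i ≤ 1 then 0 else (r - 1).choose (i - 1) with hτdef
  have hxpow : ∀ {a b : ℕ}, a ≤ b → x ^ a ≤ x ^ b := fun h => pow_le_pow_right₀ hx h
  have hxp0 : ∀ a : ℕ, (0:ℤ) ≤ x ^ a := fun a => pow_nonneg hx0 a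
  have hτ0 : (τ 0 : ℤ) = 0 := by simp [hτdef]
  have hτ1 : (τ 1 : ℤ) = 0 := by simp [hτdef]
  have hτr : (τ r : ℤ) = 1 := by
    simp [hτdef, show ¬ r ≤ 1 by omega, Nat.choose_self]
  have hτrm1 : 3 ≤ r → (τ (r - 1) : ℤ) = (r : ℤ) - 1 := by
    intro hr3
    have h3 : ¬ r - 1 ≤ 1 := by omega
    have h5 : (1:ℕ) ≤ r - 1 := by omega
    simp only [hτdef, h3, if_false]
    rw [show r - 1 - 1 = (r-1) - 1 from rfl, Nat.choose_symm h5, Nat.choose_one_right]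
    push_cast [show (1:ℕ) ≤ r from by omega]
    ring
  -- key pair inequality for 2 ≤ i, 2i ≤ r
  have key : ∀ i, 2 ≤ i → 2 * i ≤ r →
      (ρ i : ℤ) * x ^ (r - i) + (ρ (r - i) : ℤ) * x ^ i ≤
      (τ i : ℤ) * x ^ (r - i) + (τ (r - i) : ℤ) * x ^ i := by
    intro i hi2 hir
    have hile : i ≤ r - i := by omega
    have hE : (ρ i : ℤ) ≤ (r - 1).choose (i - 1) := by exact_mod_cast hEKR i hi2 hir
    have hpascal : r.choose i = (r - 1).choose (i - 1) + (r - 1).choose i := by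
      have hh1 : r = (r - 1) + 1 := by omega
      have hh2 : i = (i - 1) + 1 := by omega
      rw [hh1, hh2, Nat.choose_succ_succ]
      congr 2 <;> omega
    have hP : (ρ i : ℤ) + (ρ (r - i) : ℤ) ≤
        ((r-1).choose (i-1) : ℤ) + ((r-1).choose i : ℤ) := by
      have := hpair i (by omega)
      rw [hpascal] at this
      exact_mod_cast this
    have hτi : (τ i : ℤ) = (r - 1).choose (i - 1) := by
      simp [hτdef, show ¬ i ≤ 1 by omega]
    have hτri : (τ (r - i) : ℤ) = (r - 1).choose i := by
      have h3 : ¬ r - i ≤ 1 := by omega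
      have h4 : r - i - 1 = (r - 1) - i := by omega
      have h5 : i ≤ r - 1 := by omega
      simp only [hτdef, h3, if_false, h4]
      rw [Nat.choose_symm h5]
    have hXY : x ^ i ≤ x ^ (r - i) := hxpow hile
    rw [hτi, hτri]
    have hint1 : (0:ℤ) ≤ (((r - 1).choose (i - 1) : ℤ) - ρ i) * (x ^ (r - i) - x ^ i) :=
      mul_nonneg (sub_nonneg.2 hE) (sub_nonneg.2 hXY)
    have hint2 := mul_le_mul_of_nonneg_right hP (hxp0 i)
    nlinarith [hint1, hint2]
  -- termwise inequality
  have term : ∀ i ∈ Finset.range (r + 1),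
      (ρ i : ℤ) * x ^ (r - i) + (ρ (r - i) : ℤ) * x ^ i ≤
      (τ i : ℤ) * x ^ (r - i) + (τ (r - i) : ℤ) * x ^ i
        + ((if i = 1 then x else 0) + (if i = r - 1 then x else 0)) := by
    intro i hi
    simp only [Finset.mem_range] at hi
    have hρr1 : (ρ r : ℤ) ≤ 1 := by
      have := hpair 0 (by omega)
      simp [h0, Nat.choose_zero_right] at this
      exact_mod_cast this
    have hρrm1 : (ρ (r - 1) : ℤ) ≤ r := by
      have h := hpair 1 (by omega)
      rw [h1, Nat.choose_one_right] at h
      have : ρ (r - 1) ≤ r := by omega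
      exact_mod_cast this
    rcases eq_or_ne i 0 with rfl | hi0
    · rw [Nat.sub_zero, h0, hτ0, hτr, if_neg (show (0:ℕ) ≠ 1 by omega),
        if_neg (show (0:ℕ) ≠ r - 1 by omega)]
      push_cast
      simp only [pow_zero, mul_one, zero_mul, zero_add, add_zero]
      linarith
    rcases eq_or_ne r i with rfl | hirne
    · rw [Nat.sub_self, h0, hτr, hτ0, if_neg (show r ≠ 1 by omega),
        if_neg (show r ≠ r - 1 by omega)]
      push_cast
      simp only [pow_zero, mul_one, zero_mul, add_zero, one_mul]
      linarith
    rcases eq_or_ne i 1 with rfl | hi1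
    · rcases eq_or_ne r 2 with rfl | hr2
      · norm_num [h1, hτ1]
        linarith [hxp0 1]
      · rw [h1, hτ1, if_pos rfl, if_neg (show (1:ℕ) ≠ r - 1 by omega), hτrm1 (by omega)]
        push_cast
        simp only [zero_mul, zero_add, pow_one, add_zero]
        have := mul_le_mul_of_nonneg_right hρrm1 hx0
        linarith
    rcases eq_or_ne i (r - 1) with rfl | hirm1
    · have hr3 : 3 ≤ r := by omega
      rw [show r - (r - 1) = 1 from by omega, h1, hτ1, hτrm1 hr3,
        if_neg (show r - 1 ≠ 1 by omega), if_pos rfl]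
      push_cast
      simp only [zero_mul, add_zero, pow_one, zero_add]
      have := mul_le_mul_of_nonneg_right hρrm1 hx0
      linarith
    -- now 2 ≤ i ≤ r - 2
    have hi2 : 2 ≤ i := by omega
    have hA : (0:ℤ) ≤ (if i = 1 then x else 0) := by split_ifs <;> linarith
    have hB : (0:ℤ) ≤ (if i = r - 1 then x else 0) := by split_ifs <;> linarith
    rcases le_or_gt (2 * i) r with hle | hlt
    · linarith [key i hi2 hle]
    · have hj2 : 2 ≤ r - i := by omega
      have hjle : 2 * (r - i) ≤ r := by omega
      have hk := key (r - i) hj2 hjle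
      rw [show r - (r - i) = i from by omega] at hk
      linarith
  -- reflection identities
  have reflρ : ∑ i ∈ Finset.range (r+1), (ρ (r - i) : ℤ) * x ^ i
      = ∑ i ∈ Finset.range (r+1), (ρ i : ℤ) * x ^ (r - i) := by
    rw [← Finset.sum_range_reflect (fun j => (ρ j : ℤ) * x ^ (r - j)) (r+1)]
    refine Finset.sum_congr rfl fun i hi => ?_
    simp only [Finset.mem_range] at hi
    rw [show r + 1 - 1 - i = r - i from by omega, show r - (r - i) = i from by omega]
  have reflτ : ∑ i ∈ Finset.range (r+1), (τ (r - i) : ℤ) * x ^ i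
      = ∑ i ∈ Finset.range (r+1), (τ i : ℤ) * x ^ (r - i) := by
    rw [← Finset.sum_range_reflect (fun j => (τ j : ℤ) * x ^ (r - j)) (r+1)]
    refine Finset.sum_congr rfl fun i hi => ?_
    simp only [Finset.mem_range] at hi
    rw [show r + 1 - 1 - i = r - i from by omega, show r - (r - i) = i from by omega]
  have hif1 : ∑ i ∈ Finset.range (r+1), (if i = 1 then x else 0) = x := by
    rw [Finset.sum_ite_eq' (Finset.range (r+1)) 1 (fun _ => x)]
    rw [if_pos (by simp [Finset.mem_range]; omega)]
  have hif2 : ∑ i ∈ Finset.range (r+1), (if i = r - 1 then x else 0) = x := by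
    rw [Finset.sum_ite_eq' (Finset.range (r+1)) (r-1) (fun _ => x)]
    rw [if_pos (by simp [Finset.mem_range])]
  have hsum := Finset.sum_le_sum term
  rw [Finset.sum_add_distrib, Finset.sum_add_distrib, Finset.sum_add_distrib,
    Finset.sum_add_distrib, reflρ, reflτ, hif1, hif2] at hsum
  have hST : (∑ i ∈ Finset.range (r+1), (ρ i : ℤ) * x ^ (r - i))
      ≤ (∑ i ∈ Finset.range (r+1), (τ i : ℤ) * x ^ (r - i)) + x := by linarith
  -- compute T
  obtain ⟨m, rfl⟩ : ∃ m, r = m + 2 := ⟨r - 2, by omega⟩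
  have hTeq : (∑ i ∈ Finset.range (m+2+1), (τ i : ℤ) * x ^ (m+2-i))
      = ∑ i ∈ Finset.range (m+1), ((m+1).choose (i+1) : ℤ) * x ^ (m - i) := by
    rw [Finset.sum_range_succ', Finset.sum_range_succ']
    rw [show ((0:ℕ)+1) = 1 from rfl, hτ0, hτ1]
    simp only [zero_mul, add_zero]
    refine Finset.sum_congr rfl fun i hi => ?_
    have h1' : (τ (i+1+1) : ℤ) = ((m+1).choose (i+1) : ℤ) := by
      simp [hτdef, show ¬ i+1+1 ≤ 1 from by omega, show m+2-1 = m+1 from rfl]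
    rw [h1', show m+2-(i+1+1) = m - i from by omega]
  have hbin2 : (x+1)^(m+1)
      = (∑ i ∈ Finset.range (m+1), ((m+1).choose (i+1):ℤ) * x^(m-i)) + x^(m+1) := by
    rw [add_comm x 1, add_pow, Finset.sum_range_succ']
    simp only [one_pow, one_mul, Nat.choose_zero_right, Nat.cast_one, mul_one, Nat.sub_zero]
    congr 1
    refine Finset.sum_congr rfl fun i hi => ?_
    rw [show m+1-(i+1) = m - i from by omega]
    ring
  rw [hnx, show (m + 2 : ℕ) - 1 = m + 1 from by omega]
  linarith [hST, hTeq, hbin2]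
end

section
/- Let F be a finite family of finite sets, each of size at most r, and suppose F contains no sunflower with t petals (t ≥ 1). Then |F| ≤ r! · (t-1)^r. -/
/-!
Induction on `r`. Take a maximal pairwise disjoint subfamily `𝒟 ⊆ 𝒜`: it is a sunflower with
empty core, so `#𝒟 ≤ t - 1`, and every member of `𝒜` equals or meets a member of `𝒟`. The sets
through a point `a` correspond to the link `𝒜.memberSubfamily a`, a sunflower-free family of
smaller sets, so each `A ∈ 𝒟` accounts for at most `max 1 (#A · r! (t - 1) ^ r)` members of `𝒜`.
-/

open Finset
open scoped Nat

section Sunflower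

variable {α : Type*} [DecidableEq α]

def HasSunflower (t : ℕ) (𝒜 : Finset (Finset α)) : Prop :=
  ∃ S ⊆ 𝒜, #S = t ∧ ∃ C : Finset α, ∀ A ∈ S, ∀ B ∈ S, A ≠ B → A ∩ B = C

lemma hasSunflower_of_pairwiseDisjoint {t : ℕ} {𝒜 𝒟 : Finset (Finset α)} (h𝒟𝒜 : 𝒟 ⊆ 𝒜)
    (h𝒟 : (𝒟 : Set (Finset α)).PairwiseDisjoint id) (ht : t ≤ #𝒟) : HasSunflower t 𝒜 := by
  obtain ⟨S, hS𝒟, hSt⟩ := exists_subset_card_eq ht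
  exact ⟨S, hS𝒟.trans h𝒟𝒜, hSt, ∅, fun A hA B hB hAB =>
    disjoint_iff_inter_eq_empty.mp (h𝒟 (hS𝒟 hA) (hS𝒟 hB) hAB)⟩

lemma two_le_of_not_hasSunflower {t : ℕ} {𝒜 : Finset (Finset α)} (h𝒜 : 𝒜.Nonempty)
    (hsf : ¬ HasSunflower t 𝒜) : 2 ≤ t := by
  obtain ⟨A, hA⟩ := h𝒜
  by_contra! ht
  interval_cases t
  · exact hsf ⟨∅, empty_subset _, card_empty, ∅, by simp⟩
  · exact hsf ⟨{A}, singleton_subset_iff.mpr hA, card_singleton A, ∅, by simp +contextual⟩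

lemma HasSunflower.of_memberSubfamily {t : ℕ} {𝒜 : Finset (Finset α)} {a : α}
    (h : HasSunflower t (𝒜.memberSubfamily a)) : HasSunflower t 𝒜 := by
  obtain ⟨S, hS, hSt, C, hC⟩ := h
  have ha : ∀ A ∈ S, a ∉ A := fun A hA => (mem_memberSubfamily.mp (hS hA)).2
  refine ⟨S.image (insert a), ?_, ?_, insert a C, ?_⟩
  · simp only [image_subset_iff]
    exact fun A hA => (mem_memberSubfamily.mp (hS hA)).1
  · rw [card_image_of_injOn (insert_erase_invOn.2.injOn.mono ha), hSt]
  · simp only [mem_image]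
    rintro _ ⟨A, hA, rfl⟩ _ ⟨B, hB, rfl⟩ hAB
    rw [← insert_inter_distrib, hC A hA B hB (ne_of_apply_ne _ hAB)]

lemma card_memberSubfamily (a : α) (𝒜 : Finset (Finset α)) :
    #(𝒜.memberSubfamily a) = #{A ∈ 𝒜 | a ∈ A} :=
  card_image_of_injOn ((erase_injOn' a).mono fun _ hA => (mem_filter.mp hA).2)

lemma card_le_of_mem_memberSubfamily {r : ℕ} {𝒜 : Finset (Finset α)} {a : α}
    (h𝒜 : ∀ A ∈ 𝒜, #A ≤ r + 1) : ∀ A ∈ 𝒜.memberSubfamily a, #A ≤ r := by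
  intro A hA
  obtain ⟨hA𝒜, haA⟩ := mem_memberSubfamily.mp hA
  simpa [card_insert_of_notMem haA] using h𝒜 _ hA𝒜

lemma exists_pairwiseDisjoint_subset_forall_eq_or_not_disjoint (𝒜 : Finset (Finset α)) :
    ∃ 𝒟 ⊆ 𝒜, (𝒟 : Set (Finset α)).PairwiseDisjoint id ∧
      ∀ B ∈ 𝒜, ∃ A ∈ 𝒟, B = A ∨ ¬ Disjoint B A := by
  induction 𝒜 using Finset.induction_on with
  | empty => exact ⟨∅, empty_subset _, by simp, by simp⟩
  | insert B 𝒜 _ ih =>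
    obtain ⟨𝒟, h𝒟𝒜, h𝒟, hcover⟩ := ih
    by_cases hB : ∃ A ∈ 𝒟, ¬ Disjoint B A
    · refine ⟨𝒟, h𝒟𝒜.trans (subset_insert _ _), h𝒟, ?_⟩
      rintro C hC
      rcases mem_insert.mp hC with rfl | hC
      · obtain ⟨A, hA, hBA⟩ := hB
        exact ⟨A, hA, Or.inr hBA⟩
      · exact hcover C hC
    · push Not at hB
      refine ⟨insert B 𝒟, insert_subset_insert _ h𝒟𝒜, ?_, ?_⟩
      · rw [coe_insert]
        exact h𝒟.insert fun A hA _ => hB A hA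
      · rintro C hC
        rcases mem_insert.mp hC with rfl | hC
        · exact ⟨C, mem_insert_self _ _, Or.inl rfl⟩
        · obtain ⟨A, hA, hCA⟩ := hcover C hC
          exact ⟨A, mem_insert_of_mem hA, hCA⟩

lemma card_filter_eq_or_not_disjoint_le {𝒜 : Finset (Finset α)} {A : Finset α} {M : ℕ}
    (hdeg : ∀ a ∈ A, #{B ∈ 𝒜 | a ∈ B} ≤ M) :
    #{B ∈ 𝒜 | B = A ∨ ¬ Disjoint B A} ≤ max 1 (#A * M) := by
  rcases A.eq_empty_or_nonempty with rfl | ⟨a, ha⟩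
  · refine le_max_of_le_left (card_le_one.mpr ?_)
    simp +contextual
  · refine le_max_of_le_right ?_
    calc #{B ∈ 𝒜 | B = A ∨ ¬ Disjoint B A}
        ≤ #(A.biUnion fun a => {B ∈ 𝒜 | a ∈ B}) := by
          refine card_le_card fun B hB => ?_
          obtain ⟨hB𝒜, rfl | hBA⟩ := mem_filter.mp hB
          · exact mem_biUnion.mpr ⟨a, ha, mem_filter.mpr ⟨hB𝒜, ha⟩⟩
          · obtain ⟨b, hbB, hbA⟩ := not_disjoint_iff.mp hBA
            exact mem_biUnion.mpr ⟨b, hbA, mem_filter.mpr ⟨hB𝒜, hbB⟩⟩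
      _ ≤ #A * M := card_biUnion_le_card_mul _ _ _ hdeg

theorem card_le_of_not_hasSunflower {t : ℕ} (r : ℕ) (𝒜 : Finset (Finset α))
    (h𝒜 : ∀ A ∈ 𝒜, #A ≤ r) (hsf : ¬ HasSunflower t 𝒜) : #𝒜 ≤ r ! * (t - 1) ^ r := by
  induction r generalizing 𝒜 with
  | zero =>
    refine card_le_one.mpr fun A hA B hB => ?_
    rw [card_eq_zero.mp (Nat.le_zero.mp (h𝒜 A hA)), card_eq_zero.mp (Nat.le_zero.mp (h𝒜 B hB))]
  | succ r ih =>
    rcases 𝒜.eq_empty_or_nonempty with rfl | h𝒜ne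
    · simp
    have ht := two_le_of_not_hasSunflower h𝒜ne hsf
    set M := r ! * (t - 1) ^ r
    have hM : 1 ≤ M := Nat.mul_pos r.factorial_pos (Nat.pow_pos (by omega))
    have hdeg (a : α) : #{B ∈ 𝒜 | a ∈ B} ≤ M := by
      rw [← card_memberSubfamily]
      exact ih _ (card_le_of_mem_memberSubfamily h𝒜) fun h => hsf h.of_memberSubfamily
    obtain ⟨𝒟, h𝒟𝒜, h𝒟, hcover⟩ := exists_pairwiseDisjoint_subset_forall_eq_or_not_disjoint 𝒜
    have h𝒟t : #𝒟 ≤ t - 1 := by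
      by_contra! h
      exact hsf (hasSunflower_of_pairwiseDisjoint h𝒟𝒜 h𝒟 (by omega))
    calc #𝒜 ≤ #(𝒟.biUnion fun A => {B ∈ 𝒜 | B = A ∨ ¬ Disjoint B A}) := by
          refine card_le_card fun B hB => ?_
          obtain ⟨A, hA, hBA⟩ := hcover B hB
          exact mem_biUnion.mpr ⟨A, hA, mem_filter.mpr ⟨hB, hBA⟩⟩
      _ ≤ #𝒟 * ((r + 1) * M) := card_biUnion_le_card_mul _ _ _ fun A hA =>
          (card_filter_eq_or_not_disjoint_le fun a _ => hdeg a).trans <|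
            max_le (by nlinarith) (Nat.mul_le_mul_right _ (h𝒜 A (h𝒟𝒜 hA)))
      _ ≤ (t - 1) * ((r + 1) * M) := Nat.mul_le_mul_right _ h𝒟t
      _ = (r + 1)! * (t - 1) ^ (r + 1) := by rw [Nat.factorial_succ, pow_succ]; ring

end Sunflower

theorem stmt_13_general {α : Type*} [DecidableEq α] (r t : ℕ)
    (F : Finset (Finset α)) (hcard : ∀ A ∈ F, A.card ≤ r)
    (hsf : ¬ ∃ S ⊆ F, S.card = t ∧
      ∃ C : Finset α, ∀ A ∈ S, ∀ B ∈ S, A ≠ B → A ∩ B = C) :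
    F.card ≤ r.factorial * (t - 1) ^ r :=
  card_le_of_not_hasSunflower r F hcard hsf

theorem stmt_13 {α : Type*} [DecidableEq α] (r t : ℕ) (ht : 1 ≤ t)
    (F : Finset (Finset α)) (hcard : ∀ A ∈ F, A.card ≤ r)
    (hsf : ¬ ∃ S ⊆ F, S.card = t ∧
      ∃ C : Finset α, ∀ A ∈ S, ∀ B ∈ S, A ≠ B → A ∩ B = C) :
    F.card ≤ r.factorial * (t - 1) ^ r :=
  stmt_13_general r t F hcard hsf
end

section
/- Let r ≥ 1, s ≥ 1, and let B be a finite family of sets each of size at most r, with matching number ν(B) = s. Suppose B contains a sunflower F_1, ..., F_{rs+1} with rs+1 petals and nonempty core C, such that the family obtained from B by replacing all supersets of C with the single set C has matching number at least s+1. Then a contradiction follows; i.e., no such configuration exists. -/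
theorem stmt_14 {α : Type*} [DecidableEq α] (r s : ℕ) (hr : 1 ≤ r) (hs : 1 ≤ s)
    (B : Finset (Finset α)) (hcard : ∀ A ∈ B, A.card ≤ r)
    (hmatch : ∃ M ⊆ B, M.card = s ∧ (M : Set (Finset α)).Pairwise Disjoint)
    (hnomatch : ¬ ∃ M ⊆ B, M.card = s + 1 ∧ (M : Set (Finset α)).Pairwise Disjoint)
    (F : Fin (r * s + 1) → Finset α) (hFinj : Function.Injective F)
    (hFB : ∀ i, F i ∈ B)
    (C : Finset α) (hC : C.Nonempty)
    (hcore : ∀ i j, i ≠ j → F i ∩ F j = C)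
    (hshrink : ∃ M ⊆ (B.filter (fun A => ¬ C ⊆ A)) ∪ {C},
      M.card = s + 1 ∧ (M : Set (Finset α)).Pairwise Disjoint) :
    False := by
  obtain ⟨M, hMsub, hMcard, hMdisj⟩ := hshrink
  -- C must belong to M
  have hCM : C ∈ M := by
    by_contra hCM
    refine hnomatch ⟨M, ?_, hMcard, hMdisj⟩
    intro A hA
    have := hMsub hA
    rcases Finset.mem_union.1 this with h | h
    · exact (Finset.mem_filter.1 h).1
    · exact absurd (Finset.mem_singleton.1 h ▸ hA) hCM
  set M' := M.erase C with hM'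
  have hM'card : M'.card = s := by
    rw [hM', Finset.card_erase_of_mem hCM, hMcard]; omega
  have hM'B : ∀ A ∈ M', A ∈ B := by
    intro A hA
    have hAne : A ≠ C := Finset.ne_of_mem_erase hA
    have hAM : A ∈ M := Finset.mem_of_mem_erase hA
    rcases Finset.mem_union.1 (hMsub hAM) with h | h
    · exact (Finset.mem_filter.1 h).1
    · exact absurd (Finset.mem_singleton.1 h) hAne
  have hM'disjC : ∀ A ∈ M', Disjoint C A := by
    intro A hA
    exact hMdisj hCM (Finset.mem_of_mem_erase hA)
      (fun h => Finset.ne_of_mem_erase hA h.symm)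
  have hM'disj : (M' : Set (Finset α)).Pairwise Disjoint :=
    hMdisj.mono (by intro x hx; exact Finset.mem_of_mem_erase hx)
  -- C ⊆ F i for all i
  have hCF : ∀ i, C ⊆ F i := by
    intro i
    haveI : Nontrivial (Fin (r * s + 1)) := Fin.nontrivial_iff_two_le.2 (by nlinarith)
    obtain ⟨j, hj⟩ := exists_ne i
    rw [← hcore j i hj]
    exact Finset.inter_subset_right
  set U := M'.biUnion id with hU
  have hUcard : U.card ≤ r * s := by
    calc U.card ≤ ∑ A ∈ M', (id A).card := Finset.card_biUnion_le
    _ ≤ ∑ A ∈ M', r := Finset.sum_le_sum (fun A hA => hcard A (hM'B A hA))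
    _ = s * r := by rw [Finset.sum_const, hM'card, smul_eq_mul]
    _ = r * s := Nat.mul_comm s r
  -- every petal meets U
  have key : ∀ i : Fin (r * s + 1), ((F i \ C) ∩ U).Nonempty := by
    intro i
    by_contra hne
    rw [Finset.not_nonempty_iff_eq_empty] at hne
    have hFnotM' : F i ∉ M' := by
      intro h
      exact hC.ne_empty ((hM'disjC _ h).eq_bot_of_le (hCF i))
    have hdisjFi : ∀ A ∈ M', Disjoint (F i) A := by
      intro A hA
      rw [Finset.disjoint_left]
      intro x hx hxA
      by_cases hxC : x ∈ C
      · exact Finset.disjoint_left.1 (hM'disjC A hA) hxC hxA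
      · have hxU : x ∈ U := Finset.mem_biUnion.2 ⟨A, hA, hxA⟩
        have : x ∈ (F i \ C) ∩ U := Finset.mem_inter.2 ⟨Finset.mem_sdiff.2 ⟨hx, hxC⟩, hxU⟩
        simp [hne] at this
    refine hnomatch ⟨insert (F i) M', ?_, ?_, ?_⟩
    · intro A hA
      rcases Finset.mem_insert.1 hA with h | h
      · exact h ▸ hFB i
      · exact hM'B A h
    · rw [Finset.card_insert_of_notMem hFnotM', hM'card]
    · rw [Finset.coe_insert]
      intro a ha b hb hab
      rcases ha with ha | ha <;> rcases hb with hb | hb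
      · exact absurd (ha.trans hb.symm) hab
      · exact ha ▸ hdisjFi b hb
      · exact (hb ▸ hdisjFi a ha).symm
      · exact hM'disj ha hb hab
  choose x hx using key
  have hxU : ∀ i, x i ∈ U := fun i => (Finset.mem_inter.1 (hx i)).2
  have hxF : ∀ i, x i ∈ F i \ C := fun i => (Finset.mem_inter.1 (hx i)).1
  have hxinj : Function.Injective x := by
    intro i j hij
    by_contra hne
    have h1 := hxF i
    have h2 := hxF j
    rw [hij] at h1
    have : x j ∈ F i ∩ F j := Finset.mem_inter.2 ⟨(Finset.mem_sdiff.1 h1).1, (Finset.mem_sdiff.1 h2).1⟩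
    rw [hcore i j hne] at this
    exact (Finset.mem_sdiff.1 h2).2 this
  have : r * s + 1 ≤ U.card := by
    have := Finset.card_le_card_of_injOn (s := Finset.univ) x (fun i _ => hxU i) (hxinj.injOn)
    simpa using this
  omega
end

section
/- Let n ≥ 2 and let F ⊆ [n] × [n] × [n] be an intersecting family (any two triples agree in some coordinate) containing three triples (v_1, v_2, w_3), (v_1, w_2, v_3), (w_1, v_2, v_3) with v_i ≠ w_i for i = 1, 2, 3. If some triple F_0 ∈ F satisfies F_0[ℓ] ≠ v_ℓ for all ℓ ∈ {1,2,3}, then F_0 = (w_1, w_2, w_3). -/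
theorem stmt_18 (n : ℕ) (hn : 2 ≤ n) (F : Finset (Fin n × Fin n × Fin n))
    (hint : ∀ A ∈ F, ∀ B ∈ F, A.1 = B.1 ∨ A.2.1 = B.2.1 ∨ A.2.2 = B.2.2)
    (v₁ v₂ v₃ w₁ w₂ w₃ : Fin n)
    (h1 : v₁ ≠ w₁) (h2 : v₂ ≠ w₂) (h3 : v₃ ≠ w₃)
    (hm1 : (v₁, v₂, w₃) ∈ F) (hm2 : (v₁, w₂, v₃) ∈ F) (hm3 : (w₁, v₂, v₃) ∈ F)
    (F₀ : Fin n × Fin n × Fin n) (hF₀ : F₀ ∈ F)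
    (hd1 : F₀.1 ≠ v₁) (hd2 : F₀.2.1 ≠ v₂) (hd3 : F₀.2.2 ≠ v₃) :
    F₀ = (w₁, w₂, w₃) := by
  have a1 := hint F₀ hF₀ _ hm1
  have a2 := hint F₀ hF₀ _ hm2
  have a3 := hint F₀ hF₀ _ hm3
  simp only [Prod.ext_iff]
  refine ⟨?_, ?_, ?_⟩
  · rcases a3 with h | h | h <;> simp_all
  · rcases a2 with h | h | h <;> simp_all
  · rcases a1 with h | h | h <;> simp_all
end
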